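/- Let h : ℝ^m → ℝ ∪ {+∞} be proper, convex and lower semicontinuous, and let F : ℝ^m → ℝ^m be L-Lipschitz. Let β ∈ (0, 1/3] and γ = (1−β)/(6L). Given points z₀, z, g ∈ ℝ^m, set z̄ = β z₀ + (1−β) z and z₊ = prox_{γh}(z̄ − γ g). Then the vector v := γ^{-1}(z̄ − z₊) − g satisfies v ∈ ∂h(z₊), and dist²(0, F(z₊) + ∂h(z₊)) ≤ ‖F(z₊) + v‖² ≤ c·( ((1−β)/(12L²))‖g − F(z)‖² + ((1−β)/3)‖z − z₊‖² + β‖z₀ − z₊‖² ), where c = max{ 48L²/(1−β), 498L²/(1−β), 162L² }. -/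

import Mathlib

open scoped RealInnerProductSpace

noncomputable section

/-- `p` is the proximal point `prox_{γ h}(u)` of the extended-real-valued
function `h`. -/
def IsProx {m : ℕ} (h : EuclideanSpace ℝ (Fin m) → EReal) (γ : ℝ)
    (u p : EuclideanSpace ℝ (Fin m)) : Prop :=
  ∀ w, h p + ((1 / (2 * γ) * ‖p - u‖ ^ 2 : ℝ) : EReal)
    ≤ h w + ((1 / (2 * γ) * ‖w - u‖ ^ 2 : ℝ) : EReal)

/-- The convex subdifferential of an extended-real-valued function. -/
def subdiffE {m : ℕ} (h : EuclideanSpace ℝ (Fin m) → EReal)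
    (p : EuclideanSpace ℝ (Fin m)) : Set (EuclideanSpace ℝ (Fin m)) :=
  {v | ∀ w, h p + ((⟪v, w - p⟫ : ℝ) : EReal) ≤ h w}

/-
The prox optimality condition: perturbing the prox point `p` of `u` towards any `w` along the
segment and using convexity gives `h p + ⟪(u - p)/γ, w - p⟫ ≤ h w + τ ‖w - p‖² / (2γ)` for all
`τ ∈ (0, 1]`, so `(u - p)/γ ∈ ∂h(p)`. For the bound, `z̄ = β z₀ + (1 - β) z` splits the residual
`F(z₊) + v` into `F(z₊) - F(z)`, `F(z) - g`, `γ⁻¹(1 - β)(z - z₊)` and `γ⁻¹β(z₀ - z₊)`; the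
triangle inequality, Lipschitz continuity and `(a + b + c)² ≤ 3(a² + b² + c²)` then give the
estimate.
-/

open Set Filter Topology

theorem le_of_forall_le_add_mul {a b Q : ℝ} (h : ∀ τ ∈ Ioc (0 : ℝ) 1, a ≤ b + τ * Q) :
    a ≤ b := by
  have hlim : Tendsto (fun τ => b + τ * Q) (𝓝[>] 0) (𝓝 b) := by
    have hcont : Tendsto (fun τ : ℝ => b + τ * Q) (𝓝 0) (𝓝 (b + 0 * Q)) :=
      tendsto_const_nhds.add (tendsto_id.mul_const Q)
    rw [zero_mul, add_zero] at hcont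
    exact hcont.mono_left nhdsWithin_le_nhds
  refine ge_of_tendsto hlim ?_
  filter_upwards [Ioc_mem_nhdsGT one_pos] with τ hτ using h τ hτ

section Prox

variable {m : ℕ} {h : EuclideanSpace ℝ (Fin m) → EReal} {γ : ℝ}
  {u p : EuclideanSpace ℝ (Fin m)}

theorem IsProx.ne_top (hp : IsProx h γ u p) {x : EuclideanSpace ℝ (Fin m)} (hx : h x ≠ ⊤) :
    h p ≠ ⊤ := by
  intro htop
  have hle := hp x
  rw [htop, EReal.top_add_of_ne_bot (EReal.coe_ne_bot _), top_le_iff] at hle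
  exact EReal.add_ne_top hx (EReal.coe_ne_top _) hle

theorem IsProx.add_inner_le
    (hconv : ∀ (x y : EuclideanSpace ℝ (Fin m)) (a b : ℝ), 0 ≤ a → 0 ≤ b → a + b = 1 →
      h (a • x + b • y) ≤ (a : EReal) * h x + (b : EReal) * h y)
    (hp : IsProx h γ u p) {w : EuclideanSpace ℝ (Fin m)} {r s : ℝ} (hr : h p = r)
    (hs : h w = s) {τ : ℝ} (hτ : τ ∈ Ioc (0 : ℝ) 1) :
    r + ⟪γ⁻¹ • (u - p), w - p⟫ ≤ s + τ * (‖w - p‖ ^ 2 / (2 * γ)) := by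
  have hseg : h (p + τ • (w - p)) ≤ (((1 - τ) * r + τ * s : ℝ) : EReal) := by
    have hcv := hconv p w (1 - τ) τ (by linarith [hτ.2]) hτ.1.le (by ring)
    rw [hr, hs, ← EReal.coe_mul, ← EReal.coe_mul, ← EReal.coe_add] at hcv
    convert hcv using 2
    module
  have hmin := (hp (p + τ • (w - p))).trans (add_le_add_left hseg _)
  rw [hr, ← EReal.coe_add, ← EReal.coe_add, EReal.coe_le_coe_iff] at hmin
  have hexpand : ‖p + τ • (w - p) - u‖ ^ 2
      = ‖p - u‖ ^ 2 + 2 * τ * ⟪p - u, w - p⟫ + τ ^ 2 * ‖w - p‖ ^ 2 := by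
    rw [show p + τ • (w - p) - u = (p - u) + τ • (w - p) by abel, norm_add_sq_real,
      real_inner_smul_right, norm_smul, mul_pow, Real.norm_eq_abs, sq_abs]
    ring
  have hinner : ⟪γ⁻¹ • (u - p), w - p⟫ = -γ⁻¹ * ⟪p - u, w - p⟫ := by
    rw [real_inner_smul_left, ← neg_sub p u, inner_neg_left]
    ring
  rw [hexpand] at hmin
  rw [hinner]
  refine le_of_mul_le_mul_left ?_ hτ.1
  linear_combination hmin

theorem IsProx.inv_smul_sub_mem_subdiffE
    (hproper : (∃ x, h x ≠ ⊤) ∧ ∀ x, h x ≠ ⊥)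
    (hconv : ∀ (x y : EuclideanSpace ℝ (Fin m)) (a b : ℝ), 0 ≤ a → 0 ≤ b → a + b = 1 →
      h (a • x + b • y) ≤ (a : EReal) * h x + (b : EReal) * h y)
    (hp : IsProx h γ u p) : γ⁻¹ • (u - p) ∈ subdiffE h p := by
  obtain ⟨⟨x₀, hx₀⟩, hbot⟩ := hproper
  intro w
  by_cases hw : h w = ⊤
  · rw [hw]
    exact le_top
  have hr := (EReal.coe_toReal (hp.ne_top hx₀) (hbot p)).symm
  have hs := (EReal.coe_toReal hw (hbot w)).symm
  rw [hr, hs, ← EReal.coe_add, EReal.coe_le_coe_iff]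
  exact le_of_forall_le_add_mul fun τ hτ => hp.add_inner_le hconv hr hs hτ

end Prox

theorem norm_residual_le {E : Type*} [NormedAddCommGroup E] [NormedSpace ℝ E] {F : E → E}
    {L : ℝ} (hF : ∀ u v, ‖F u - F v‖ ≤ L * ‖u - v‖) {κ β : ℝ} (hκ : 0 ≤ κ)
    (hβ : β ∈ Icc (0 : ℝ) 1) (z₀ z g p : E) :
    ‖F p + (κ • (β • z₀ + (1 - β) • z - p) - g)‖
      ≤ ‖g - F z‖ + (L + κ * (1 - β)) * ‖z - p‖ + κ * β * ‖z₀ - p‖ := by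
  have hsplit : F p + (κ • (β • z₀ + (1 - β) • z - p) - g)
      = (F p - F z) + (F z - g) + (κ * (1 - β)) • (z - p) + (κ * β) • (z₀ - p) := by
    module
  have h1 : 0 ≤ κ * (1 - β) := mul_nonneg hκ (by linarith [hβ.2])
  have h2 : 0 ≤ κ * β := mul_nonneg hκ hβ.1
  rw [hsplit]
  refine norm_add₄_le.trans ?_
  rw [norm_smul, norm_smul, Real.norm_of_nonneg h1, Real.norm_of_nonneg h2, norm_sub_rev (F z)]
  linarith [norm_sub_rev z p ▸ hF p z]

theorem sq_le_three_mul_of_le_add {x a b c : ℝ} (hx : 0 ≤ x) (h : x ≤ a + b + c) :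
    x ^ 2 ≤ 3 * (a ^ 2 + b ^ 2 + c ^ 2) := by
  nlinarith [sq_nonneg (a - b), sq_nonneg (b - c), sq_nonneg (a - c)]

theorem three_mul_sq_le {L β c G Z Z₀ : ℝ} (hL : 0 < L) (hβ : β ∈ Ioc (0 : ℝ) (1 / 3))
    (hc : 441 * L ^ 2 / (1 - β) ≤ c) :
    3 * (G ^ 2 + (7 * L * Z) ^ 2 + (6 * L * β / (1 - β) * Z₀) ^ 2)
      ≤ c * ((1 - β) / (12 * L ^ 2) * G ^ 2 + (1 - β) / 3 * Z ^ 2 + β * Z₀ ^ 2) := by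
  obtain ⟨hβ0, hβ1⟩ := hβ
  have hβ' : 0 < 1 - β := by linarith
  rw [div_le_iff₀ hβ'] at hc
  have hG : 3 ≤ c * ((1 - β) / (12 * L ^ 2)) := by
    rw [mul_div_assoc', le_div_iff₀ (by positivity)]
    nlinarith
  have hZ : 147 * L ^ 2 ≤ c * ((1 - β) / 3) := by linarith
  have hZ₀ : 3 * (6 * L * β / (1 - β)) ^ 2 ≤ c * β := by
    rw [div_pow, mul_div_assoc', div_le_iff₀ (by positivity)]
    nlinarith [mul_le_mul_of_nonneg_left hc (mul_nonneg hβ0.le hβ'.le)]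
  nlinarith [mul_le_mul_of_nonneg_right hG (sq_nonneg G),
    mul_le_mul_of_nonneg_right hZ (sq_nonneg Z), mul_le_mul_of_nonneg_right hZ₀ (sq_nonneg Z₀)]

theorem prox_residual_bound_general
    {m : ℕ} (h : EuclideanSpace ℝ (Fin m) → EReal)
    (hproper : (∃ x, h x ≠ ⊤) ∧ ∀ x, h x ≠ ⊥)
    (hconv : ∀ (x y : EuclideanSpace ℝ (Fin m)) (a b : ℝ), 0 ≤ a → 0 ≤ b → a + b = 1 →
      h (a • x + b • y) ≤ (a : EReal) * h x + (b : EReal) * h y)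
    (F : EuclideanSpace ℝ (Fin m) → EuclideanSpace ℝ (Fin m))
    (L : ℝ) (hL : 0 < L) (hFlip : ∀ u v, ‖F u - F v‖ ≤ L * ‖u - v‖)
    (β : ℝ) (hβ : β ∈ Set.Ioc (0 : ℝ) (1 / 3))
    (γ : ℝ) (hγ : γ = (1 - β) / (6 * L))
    (z₀ zz gg : EuclideanSpace ℝ (Fin m))
    (zbar : EuclideanSpace ℝ (Fin m)) (hzbar : zbar = β • z₀ + (1 - β) • zz)
    (zp : EuclideanSpace ℝ (Fin m)) (hzp : IsProx h γ (zbar - γ • gg) zp)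
    (c : ℝ)
    (hc : c = max (max (48 * L ^ 2 / (1 - β)) (498 * L ^ 2 / (1 - β))) (162 * L ^ 2)) :
    γ⁻¹ • (zbar - zp) - gg ∈ subdiffE h zp
      ∧ (Metric.infDist 0 ((fun v => F zp + v) '' subdiffE h zp)) ^ 2
          ≤ ‖F zp + (γ⁻¹ • (zbar - zp) - gg)‖ ^ 2
      ∧ ‖F zp + (γ⁻¹ • (zbar - zp) - gg)‖ ^ 2
          ≤ c * (((1 - β) / (12 * L ^ 2)) * ‖gg - F zz‖ ^ 2
              + ((1 - β) / 3) * ‖zz - zp‖ ^ 2 + β * ‖z₀ - zp‖ ^ 2) := by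
  have hβ' : 0 < 1 - β := by linarith [hβ.2]
  have hγ0 : 0 < γ := by rw [hγ]; positivity
  have hsub : γ⁻¹ • (zbar - zp) - gg ∈ subdiffE h zp := by
    have hmem := hzp.inv_smul_sub_mem_subdiffE hproper hconv
    rwa [sub_right_comm, smul_sub, smul_smul, inv_mul_cancel₀ hγ0.ne', one_smul] at hmem
  refine ⟨hsub, ?_, ?_⟩
  · have hdist := Metric.infDist_le_dist_of_mem (x := 0) (Set.mem_image_of_mem (F zp + ·) hsub)
    rw [dist_zero_left] at hdist
    exact pow_le_pow_left₀ Metric.infDist_nonneg hdist 2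
  · have hc' : 441 * L ^ 2 / (1 - β) ≤ c := by
      refine le_trans ?_ (hc ▸ le_max_of_le_left (le_max_right _ _))
      gcongr
      norm_num
    have hres := norm_residual_le hFlip (inv_nonneg.2 hγ0.le) ⟨hβ.1.le, by linarith⟩ z₀ zz gg zp
    rw [← hzbar] at hres
    refine (sq_le_three_mul_of_le_add (norm_nonneg _) (hres.trans_eq ?_)).trans
      (three_mul_sq_le hL hβ hc')
    rw [hγ, inv_div]
    field_simp
    ring

/-- Residual bound at the half step of the anchored extragradient method: the
vector `v = γ⁻¹(z̄ − z₊) − g` is a subgradient of `h` at `z₊`, and the squared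
residual `dist²(0, F(z₊) + ∂h(z₊))` is controlled by `‖g − F(z)‖²`,
`‖z − z₊‖²` and `β‖z₀ − z₊‖²`. -/
theorem prox_residual_bound
    {m : ℕ} (h : EuclideanSpace ℝ (Fin m) → EReal)
    (hproper : (∃ x, h x ≠ ⊤) ∧ ∀ x, h x ≠ ⊥)
    (hconv : ∀ (x y : EuclideanSpace ℝ (Fin m)) (a b : ℝ), 0 ≤ a → 0 ≤ b → a + b = 1 →
      h (a • x + b • y) ≤ (a : EReal) * h x + (b : EReal) * h y)
    (hlsc : LowerSemicontinuous h)
    (F : EuclideanSpace ℝ (Fin m) → EuclideanSpace ℝ (Fin m))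
    (L : ℝ) (hL : 0 < L) (hFlip : ∀ u v, ‖F u - F v‖ ≤ L * ‖u - v‖)
    (β : ℝ) (hβ : β ∈ Set.Ioc (0 : ℝ) (1 / 3))
    (γ : ℝ) (hγ : γ = (1 - β) / (6 * L))
    (z₀ zz gg : EuclideanSpace ℝ (Fin m))
    (zbar : EuclideanSpace ℝ (Fin m)) (hzbar : zbar = β • z₀ + (1 - β) • zz)
    (zp : EuclideanSpace ℝ (Fin m)) (hzp : IsProx h γ (zbar - γ • gg) zp)
    (c : ℝ)
    (hc : c = max (max (48 * L ^ 2 / (1 - β)) (498 * L ^ 2 / (1 - β))) (162 * L ^ 2)) :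
    γ⁻¹ • (zbar - zp) - gg ∈ subdiffE h zp
      ∧ (Metric.infDist 0 ((fun v => F zp + v) '' subdiffE h zp)) ^ 2
          ≤ ‖F zp + (γ⁻¹ • (zbar - zp) - gg)‖ ^ 2
      ∧ ‖F zp + (γ⁻¹ • (zbar - zp) - gg)‖ ^ 2
          ≤ c * (((1 - β) / (12 * L ^ 2)) * ‖gg - F zz‖ ^ 2
              + ((1 - β) / 3) * ‖zz - zp‖ ^ 2 + β * ‖z₀ - zp‖ ^ 2) :=
  prox_residual_bound_general h hproper hconv F L hL hFlip β hβ γ hγ z₀ zz gg zbar hzbar zp hzp c hc
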